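/- Theorem 2, part 1: Let θ, W, X1, X2 be random variables on a common probability space with standard Borel value spaces, let T be a measurable function of W, and let T1, T2 be measurable functions of X1 and X2 respectively. Suppose (i) θ and (X1, X2) are conditionally independent given W, (ii) θ and W are conditionally independent given T(W), and (iii) T(W) and (X1, X2) are conditionally independent given the pair (T1(X1), T2(X2)). Then θ and (X1, X2) are conditionally independent given (T1(X1), T2(X2)). -/

import Mathlib

open MeasureTheory ProbabilityTheory

/-! Fix an event `A` of `θ` and put `p = μ⟦A | T(W)⟧`. By (ii), `p = μ⟦A | W⟧`, so by (i) the
conditional expectation of `p` given `X = (X₁, X₂)` is `μ⟦A | X⟧`. As `p` is a function of `T(W)`,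
(iii) makes its conditional expectation given `X` equal to the one given `S = (T₁(X₁), T₂(X₂))`.
Hence `μ⟦A | X⟧` is `S`-measurable, i.e. `μ⟦A | X⟧ = μ⟦A | S⟧`, which is the conditional
independence of `A` and `X` given `S`. -/

namespace MeasureTheory

variable {Ω : Type*} {m mΩ : MeasurableSpace Ω} {μ : Measure Ω}

lemma setIntegral_eq_integral_mul_indicator_one {s : Set Ω} (hs : MeasurableSet s) (f : Ω → ℝ) :
    ∫ ω in s, f ω ∂μ = ∫ ω, f ω * s.indicator 1 ω ∂μ := by
  rw [← integral_indicator hs]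
  congr 1 with ω
  by_cases hω : ω ∈ s <;> simp [hω]

lemma integrable_indicator_one [IsFiniteMeasure μ] {s : Set Ω} (hs : MeasurableSet s) :
    Integrable (s.indicator 1 : Ω → ℝ) μ :=
  (integrable_const 1).indicator hs

lemma ae_abs_condExp_indicator_le_one (s : Set Ω) : ∀ᵐ ω ∂μ, |(μ⟦s | m⟧) ω| ≤ 1 :=
  ae_bdd_abs_condExp_of_ae_bdd_abs <| ae_of_all _ fun ω => by by_cases hω : ω ∈ s <;> simp [hω]

lemma integral_mul_condExp_of_bound [IsFiniteMeasure μ] (hm : m ≤ mΩ) {g f : Ω → ℝ}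
    (hg : StronglyMeasurable[m] g) {C : ℝ} (hgC : ∀ᵐ ω ∂μ, |g ω| ≤ C) (hf : Integrable f μ) :
    ∫ ω, g ω * f ω ∂μ = ∫ ω, g ω * μ[f | m] ω ∂μ :=
  (integral_condExp hm).symm.trans <| integral_congr_ae <|
    condExp_stronglyMeasurable_mul_of_bound hm hg hf C (by simpa only [Real.norm_eq_abs] using hgC)

end MeasureTheory

namespace ProbabilityTheory

variable {Ω : Type*} {m m₁ m₂ mΩ : MeasurableSpace Ω} {μ : Measure Ω} [StandardBorelSpace Ω]
  [IsFiniteMeasure μ] {hm : m ≤ mΩ}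

lemma CondIndep.setIntegral_condExp_indicator (h : CondIndep m m₁ m₂ hm μ) (hm₁ : m₁ ≤ mΩ)
    (hm₂ : m₂ ≤ mΩ) {A B : Set Ω} (hA : MeasurableSet[m₁] A) (hB : MeasurableSet[m₂] B) :
    ∫ ω in B, (μ⟦A | m⟧) ω ∂μ = μ.real (A ∩ B) := by
  calc ∫ ω in B, (μ⟦A | m⟧) ω ∂μ = ∫ ω, (μ⟦A | m⟧) ω * B.indicator 1 ω ∂μ :=
        setIntegral_eq_integral_mul_indicator_one (hm₂ B hB) _
    _ = ∫ ω, (μ⟦A | m⟧) ω * (μ⟦B | m⟧) ω ∂μ :=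
        integral_mul_condExp_of_bound hm stronglyMeasurable_condExp
          (ae_abs_condExp_indicator_le_one A) (integrable_indicator_one (hm₂ B hB))
    _ = ∫ ω, (μ⟦A ∩ B | m⟧) ω ∂μ :=
        integral_congr_ae ((condIndep_iff m m₁ m₂ hm hm₁ hm₂ μ).1 h A B hA hB).symm
    _ = μ.real (A ∩ B) := by
        rw [integral_condExp hm]
        exact integral_indicator_one ((hm₁ A hA).inter (hm₂ B hB))

lemma CondIndep.condExp_condExp_indicator (h : CondIndep m m₁ m₂ hm μ) (hm₁ : m₁ ≤ mΩ)
    (hm₂ : m₂ ≤ mΩ) {A : Set Ω} (hA : MeasurableSet[m₁] A) :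
    μ[μ⟦A | m⟧ | m₂] =ᵐ[μ] μ⟦A | m₂⟧ := by
  refine ae_eq_condExp_of_forall_setIntegral_eq hm₂ (integrable_indicator_one (hm₁ A hA))
    (fun _ _ _ => integrable_condExp.integrableOn) (fun B hB _ => ?_)
    stronglyMeasurable_condExp.aestronglyMeasurable
  rw [setIntegral_condExp hm₂ integrable_condExp hB, h.setIntegral_condExp_indicator hm₁ hm₂ hA hB,
    setIntegral_indicator (hm₁ A hA)]
  simp [Set.inter_comm]

lemma CondIndep.condExp_ae_eq_of_le (h : CondIndep m m₁ m₂ hm μ) (hm₁ : m₁ ≤ mΩ)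
    (hm₂ : m₂ ≤ mΩ) (hle : m ≤ m₂) {g : Ω → ℝ} (hg : StronglyMeasurable[m₁] g) {C : ℝ}
    (hgC : ∀ᵐ ω ∂μ, |g ω| ≤ C) :
    μ[g | m₂] =ᵐ[μ] μ[g | m] := by
  have hg_int : Integrable g μ := .of_bound (hg.mono hm₁).aestronglyMeasurable C
    (by simpa only [Real.norm_eq_abs] using hgC)
  refine (ae_eq_condExp_of_forall_setIntegral_eq hm₂ hg_int
    (fun _ _ _ => integrable_condExp.integrableOn) (fun B hB _ => ?_)
    (stronglyMeasurable_condExp.mono hle).aestronglyMeasurable).symm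
  have hB_int := integrable_indicator_one (μ := μ) (hm₂ B hB)
  calc ∫ ω in B, μ[g | m] ω ∂μ = ∫ ω, μ[g | m] ω * B.indicator 1 ω ∂μ :=
        setIntegral_eq_integral_mul_indicator_one (hm₂ B hB) _
    _ = ∫ ω, μ[g | m] ω * (μ⟦B | m⟧) ω ∂μ :=
        integral_mul_condExp_of_bound hm stronglyMeasurable_condExp
          (ae_bdd_abs_condExp_of_ae_bdd_abs hgC) hB_int
    _ = ∫ ω, (μ⟦B | m⟧) ω * g ω ∂μ := by
        simp only [mul_comm (μ[g | m] _)]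
        exact (integral_mul_condExp_of_bound hm stronglyMeasurable_condExp
          (ae_abs_condExp_indicator_le_one B) hg_int).symm
    _ = ∫ ω, g ω * μ[μ⟦B | m⟧ | m₁] ω ∂μ := by
        simp only [mul_comm ((μ⟦B | m⟧) _)]
        exact integral_mul_condExp_of_bound hm₁ hg hgC integrable_condExp
    _ = ∫ ω, g ω * B.indicator 1 ω ∂μ := by
        rw [integral_mul_condExp_of_bound hm₁ hg hgC hB_int]
        exact integral_congr_ae (.mul .rfl (h.symm.condExp_condExp_indicator hm₂ hm₁ hB))
    _ = ∫ ω in B, g ω ∂μ := (setIntegral_eq_integral_mul_indicator_one (hm₂ B hB) _).symm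

lemma condIndep_of_condExp_indicator_ae_eq (hm₁ : m₁ ≤ mΩ) (hm₂ : m₂ ≤ mΩ) (hle : m ≤ m₂)
    (h : ∀ A, MeasurableSet[m₁] A → μ⟦A | m₂⟧ =ᵐ[μ] μ⟦A | m⟧) :
    CondIndep m m₁ m₂ (hle.trans hm₂) μ := by
  refine (condIndep_iff m m₁ m₂ _ hm₁ hm₂ μ).2 fun A B hA hB => ?_
  have hB_int := integrable_indicator_one (μ := μ) (hm₂ B hB)
  have h_inter : μ⟦A ∩ B | m₂⟧ =ᵐ[μ] μ⟦A | m⟧ * B.indicator 1 := by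
    rw [show (A ∩ B).indicator (fun _ => (1 : ℝ)) = A.indicator 1 * B.indicator 1 from
      Set.inter_indicator_one]
    have hAB_int : Integrable (A.indicator 1 * B.indicator 1 : Ω → ℝ) μ :=
      (Set.inter_indicator_one (M₀ := ℝ)) ▸ integrable_indicator_one ((hm₁ A hA).inter (hm₂ B hB))
    exact (condExp_mul_of_stronglyMeasurable_right (stronglyMeasurable_one.indicator hB) hAB_int
      (integrable_indicator_one (hm₁ A hA))).trans ((h A hA).mul .rfl)
  calc μ⟦A ∩ B | m⟧ =ᵐ[μ] μ[μ⟦A ∩ B | m₂⟧ | m] := (condExp_condExp_of_le hle hm₂).symm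
    _ =ᵐ[μ] μ[μ⟦A | m⟧ * B.indicator 1 | m] := condExp_congr_ae h_inter
    _ =ᵐ[μ] μ⟦A | m⟧ * μ⟦B | m⟧ :=
        condExp_stronglyMeasurable_mul_of_bound (hle.trans hm₂) stronglyMeasurable_condExp hB_int 1
          (by simpa only [Real.norm_eq_abs] using ae_abs_condExp_indicator_le_one A)

theorem condIndep_statistic_of_condIndep_hidden {mθ mW mG mX mS : MeasurableSpace Ω}
    (hmθ : mθ ≤ mΩ) (hmW : mW ≤ mΩ) (hmX : mX ≤ mΩ) (hGW : mG ≤ mW) (hSX : mS ≤ mX)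
    (hθX : CondIndep mW mθ mX hmW μ) (hθW : CondIndep mG mθ mW (hGW.trans hmW) μ)
    (hGX : CondIndep mS mG mX (hSX.trans hmX) μ) :
    CondIndep mS mθ mX (hSX.trans hmX) μ := by
  refine condIndep_of_condExp_indicator_ae_eq hmθ hmX hSX fun A hA => ?_
  have hW : μ⟦A | mW⟧ =ᵐ[μ] μ⟦A | mG⟧ := by
    have h := hθW.condExp_condExp_indicator hmθ hmW hA
    rw [condExp_of_stronglyMeasurable hmW (stronglyMeasurable_condExp.mono hGW)
      integrable_condExp] at h
    exact h.symm
  have hX : μ[μ⟦A | mG⟧ | mX] =ᵐ[μ] μ⟦A | mX⟧ :=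
    (condExp_congr_ae hW.symm).trans (hθX.condExp_condExp_indicator hmθ hmX hA)
  have hS : μ[μ⟦A | mG⟧ | mX] =ᵐ[μ] μ[μ⟦A | mG⟧ | mS] :=
    hGX.condExp_ae_eq_of_le (hGW.trans hmW) hmX hSX stronglyMeasurable_condExp
      (ae_abs_condExp_indicator_le_one A)
  calc μ⟦A | mX⟧ =ᵐ[μ] μ[μ⟦A | mG⟧ | mX] := hX.symm
    _ =ᵐ[μ] μ[μ⟦A | mG⟧ | mS] := hS
    _ =ᵐ[μ] μ[μ[μ⟦A | mG⟧ | mX] | mS] := (condExp_condExp_of_le hSX hmX).symm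
    _ =ᵐ[μ] μ[μ⟦A | mX⟧ | mS] := condExp_congr_ae hX
    _ =ᵐ[μ] μ⟦A | mS⟧ := condExp_condExp_of_le hSX hmX

end ProbabilityTheory

theorem globally_sufficient_of_sufficient_for_statistic_of_hidden_general
    {Ω Θ 𝒲 𝒯W 𝒳₁ 𝒳₂ 𝒯₁ 𝒯₂ : Type*}
    [MeasurableSpace Ω] [StandardBorelSpace Ω]
    [MeasurableSpace Θ]
    [MeasurableSpace 𝒲]
    [MeasurableSpace 𝒯W]
    [MeasurableSpace 𝒳₁]
    [MeasurableSpace 𝒳₂]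
    [MeasurableSpace 𝒯₁]
    [MeasurableSpace 𝒯₂]
    (μ : Measure Ω) [IsProbabilityMeasure μ]
    (θ : Ω → Θ) (W : Ω → 𝒲) (X₁ : Ω → 𝒳₁) (X₂ : Ω → 𝒳₂)
    (T : 𝒲 → 𝒯W) (T₁ : 𝒳₁ → 𝒯₁) (T₂ : 𝒳₂ → 𝒯₂)
    (hθ : Measurable θ) (hW : Measurable W) (hX₁ : Measurable X₁) (hX₂ : Measurable X₂)
    (hT : Measurable T) (hT₁ : Measurable T₁) (hT₂ : Measurable T₂)
    -- (i) θ and (X₁, X₂) are conditionally independent given W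
    (hθW : CondIndepFun (MeasurableSpace.comap W inferInstance) hW.comap_le
      θ (fun ω => (X₁ ω, X₂ ω)) μ)
    -- (ii) θ and W are conditionally independent given T(W)
    (hθT : CondIndepFun (MeasurableSpace.comap (fun ω => T (W ω)) inferInstance)
      ((hT.comp hW).comap_le) θ W μ)
    -- (iii) T(W) and (X₁, X₂) are conditionally independent given (T₁(X₁), T₂(X₂))
    (hTX : CondIndepFun
      (MeasurableSpace.comap (fun ω => (T₁ (X₁ ω), T₂ (X₂ ω))) inferInstance)
      (((hT₁.comp hX₁).prodMk (hT₂.comp hX₂)).comap_le)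
      (fun ω => T (W ω)) (fun ω => (X₁ ω, X₂ ω)) μ) :
    -- θ and (X₁, X₂) are conditionally independent given (T₁(X₁), T₂(X₂))
    CondIndepFun
      (MeasurableSpace.comap (fun ω => (T₁ (X₁ ω), T₂ (X₂ ω))) inferInstance)
      (((hT₁.comp hX₁).prodMk (hT₂.comp hX₂)).comap_le)
      θ (fun ω => (X₁ ω, X₂ ω)) μ := by
  have hGW : MeasurableSpace.comap (fun ω => T (W ω)) inferInstance
      ≤ MeasurableSpace.comap W inferInstance :=
    (hT.comp (comap_measurable W)).comap_le
  have hSX : MeasurableSpace.comap (fun ω => (T₁ (X₁ ω), T₂ (X₂ ω))) inferInstance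
      ≤ MeasurableSpace.comap (fun ω => (X₁ ω, X₂ ω)) inferInstance :=
    ((hT₁.prodMap hT₂).comp (comap_measurable fun ω => (X₁ ω, X₂ ω))).comap_le
  exact condIndep_statistic_of_condIndep_hidden hθ.comap_le hW.comap_le
    (hX₁.prodMk hX₂).comap_le hGW hSX hθW hθT hTX

/-- **Theorem 2, part 1.** Suppose (i) `θ − W − (X₁, X₂)`, (ii) `θ − T(W) − W`, and
(iii) `T(W) − (T₁(X₁), T₂(X₂)) − (X₁, X₂)` are Markov chains. Then
`θ − (T₁(X₁), T₂(X₂)) − (X₁, X₂)` is a Markov chain, i.e., `(T₁(X₁), T₂(X₂))` is globally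
sufficient for `θ`. -/
theorem globally_sufficient_of_sufficient_for_statistic_of_hidden
    {Ω Θ 𝒲 𝒯W 𝒳₁ 𝒳₂ 𝒯₁ 𝒯₂ : Type*}
    [MeasurableSpace Ω] [StandardBorelSpace Ω] [Nonempty Ω]
    [MeasurableSpace Θ] [StandardBorelSpace Θ]
    [MeasurableSpace 𝒲] [StandardBorelSpace 𝒲]
    [MeasurableSpace 𝒯W] [StandardBorelSpace 𝒯W]
    [MeasurableSpace 𝒳₁] [StandardBorelSpace 𝒳₁]
    [MeasurableSpace 𝒳₂] [StandardBorelSpace 𝒳₂]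
    [MeasurableSpace 𝒯₁] [StandardBorelSpace 𝒯₁]
    [MeasurableSpace 𝒯₂] [StandardBorelSpace 𝒯₂]
    (μ : Measure Ω) [IsProbabilityMeasure μ]
    (θ : Ω → Θ) (W : Ω → 𝒲) (X₁ : Ω → 𝒳₁) (X₂ : Ω → 𝒳₂)
    (T : 𝒲 → 𝒯W) (T₁ : 𝒳₁ → 𝒯₁) (T₂ : 𝒳₂ → 𝒯₂)
    (hθ : Measurable θ) (hW : Measurable W) (hX₁ : Measurable X₁) (hX₂ : Measurable X₂)
    (hT : Measurable T) (hT₁ : Measurable T₁) (hT₂ : Measurable T₂)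
    -- (i) θ and (X₁, X₂) are conditionally independent given W
    (hθW : CondIndepFun (MeasurableSpace.comap W inferInstance) hW.comap_le
      θ (fun ω => (X₁ ω, X₂ ω)) μ)
    -- (ii) θ and W are conditionally independent given T(W)
    (hθT : CondIndepFun (MeasurableSpace.comap (fun ω => T (W ω)) inferInstance)
      ((hT.comp hW).comap_le) θ W μ)
    -- (iii) T(W) and (X₁, X₂) are conditionally independent given (T₁(X₁), T₂(X₂))
    (hTX : CondIndepFun
      (MeasurableSpace.comap (fun ω => (T₁ (X₁ ω), T₂ (X₂ ω))) inferInstance)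
      (((hT₁.comp hX₁).prodMk (hT₂.comp hX₂)).comap_le)
      (fun ω => T (W ω)) (fun ω => (X₁ ω, X₂ ω)) μ) :
    -- θ and (X₁, X₂) are conditionally independent given (T₁(X₁), T₂(X₂))
    CondIndepFun
      (MeasurableSpace.comap (fun ω => (T₁ (X₁ ω), T₂ (X₂ ω))) inferInstance)
      (((hT₁.comp hX₁).prodMk (hT₂.comp hX₂)).comap_le)
      θ (fun ω => (X₁ ω, X₂ ω)) μ :=
  globally_sufficient_of_sufficient_for_statistic_of_hidden_general μ θ W X₁ X₂ T T₁ T₂ hθ hW hX₁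
    hX₂ hT hT₁ hT₂ hθW hθT hTX
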